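/- arXiv:2401.05056 — 9 statements merged into one kernel-verified Lean document; each statement's English description precedes it below -/
import Mathlib

section
/- Let V be a finite nonempty index set, T ∈ (0, ∞], and C₁ ∈ ℝ. Let f : V × [0,T) → ℝ be such that t ↦ f_i(t) is differentiable for each i ∈ V, let a_{ij} : [0,T) → ℝ (for i, j ∈ V) be continuous functions with a_{ij}(t) ≥ 0 for all i, j, t, and let Φ : ℝ → ℝ be locally Lipschitz. Assume that for all i ∈ V and t ∈ [0,T), d/dt f_i(t) ≥ Σ_{j∈V} a_{ij}(t)(f_j(t) − f_i(t)) + Φ(f_i(t)), and that f_i(0) ≥ C₁ for all i ∈ V. If φ : [0,T) → ℝ is differentiable with φ'(t) = Φ(φ(t)) for all t ∈ [0,T) and φ(0) = C₁, then f_i(t) ≥ φ(t) for all i ∈ V and t ∈ [0,T). -/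
/-
Perturb the comparison function to `φ t - ε * exp ((L + 1) * t)`, where `L` is a Lipschitz
constant of `Φ` on the compact set of values taken up to the time under consideration. At a
first time some `f i` touches the perturbed function, `f i` is the smallest of the `f j`, so the
coupling term is nonnegative, and the Lipschitz bound makes the gap `f i - φ + ε e^{(L+1)t}`
strictly increasing there, which is impossible at a first zero. Letting `ε → 0` gives the claim.
-/

open Set

theorem HasDerivWithinAt.nonpos_of_isMinOn_Icc {g : ℝ → ℝ} {d a s : ℝ}
    (hg : HasDerivWithinAt g d (Icc a s) s) (hmin : IsMinOn g (Icc a s) s) (has : a < s) :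
    d ≤ 0 := by
  have hcone : a - s ∈ posTangentConeAt (Icc a s) s :=
    sub_mem_posTangentConeAt_of_segment_subset
      ((convex_Icc a s).segment_subset (right_mem_Icc.2 has.le) (left_mem_Icc.2 has.le))
  have := hmin.localize.hasFDerivWithinAt_nonneg hg.hasFDerivWithinAt hcone
  simp only [ContinuousLinearMap.toSpanSingleton_apply, smul_eq_mul] at this
  nlinarith

theorem forall_pos_of_deriv_pos_at_first_zero {ι : Type*} [Finite ι] {h h' : ι → ℝ → ℝ}
    {a b : ℝ} (hcont : ∀ j, ContinuousOn (h j) (Icc a b))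
    (hderiv : ∀ j, ∀ t ∈ Ioc a b, HasDerivWithinAt (h j) (h' j t) (Icc a t) t)
    (hinit : ∀ j, 0 < h j a)
    (hcross : ∀ i, ∀ t ∈ Ioc a b, h i t = 0 → (∀ j, 0 ≤ h j t) → 0 < h' i t) :
    ∀ j, ∀ t ∈ Icc a b, 0 < h j t := by
  by_contra! hbad
  obtain ⟨j₀, t₀, ht₀, hj₀⟩ := hbad
  set A := ⋃ j, Icc a b ∩ h j ⁻¹' Iic 0
  have hA : IsCompact A :=
    isCompact_Icc.of_isClosed_subset
      (isClosed_iUnion_of_finite fun j =>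
        (hcont j).preimage_isClosed_of_isClosed isClosed_Icc isClosed_Iic)
      (iUnion_subset fun _ => inter_subset_left)
  obtain ⟨s, hsA, hsmin⟩ := hA.exists_isLeast ⟨t₀, mem_iUnion.2 ⟨j₀, ht₀, hj₀⟩⟩
  obtain ⟨i, hs, his⟩ := mem_iUnion.1 hsA
  have hbefore : ∀ j, ∀ t ∈ Ico a s, 0 < h j t := fun j t ht => by
    by_contra! hle
    exact (hsmin (mem_iUnion.2 ⟨j, ⟨ht.1, ht.2.le.trans hs.2⟩, hle⟩)).not_gt ht.2
  have has : a < s := hs.1.lt_of_ne fun has => (hinit i).not_ge (has ▸ his)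
  have hat : ∀ j, 0 ≤ h j s := fun j =>
    le_on_closure (fun t ht => (hbefore j t ht).le) continuousOn_const
      ((hcont j).mono (closure_Ico has.ne ▸ Icc_subset_Icc_right hs.2))
      (closure_Ico has.ne ▸ right_mem_Icc.2 has.le)
  have hzero : h i s = 0 := le_antisymm his (hat i)
  have hmin : IsMinOn (h i) (Icc a s) s := fun t ht => by
    rcases ht.2.lt_or_eq with hlt | rfl
    · exact hzero ▸ (hbefore i t ⟨ht.1, hlt⟩).le
    · exact le_refl (h i t)
  exact ((hderiv i s ⟨has, hs.2⟩).nonpos_of_isMinOn_Icc hmin has).not_gt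
    (hcross i s ⟨has, hs.2⟩ hzero hat)

section Comparison

variable {ι : Type*} [Fintype ι] {f f' : ι → ℝ → ℝ} {a : ι → ι → ℝ → ℝ} {Φ φ : ℝ → ℝ}
  {t₀ t₁ : ℝ}

theorem sub_exp_lt_of_coupled_differential_ineq {K : Set ℝ} {L : NNReal}
    (hΦ : LipschitzOnWith L Φ K) (hfK : ∀ j, MapsTo (f j) (Icc t₀ t₁) K)
    (hφK : MapsTo φ (Icc t₀ t₁) K)
    (hf : ∀ j, ∀ t ∈ Icc t₀ t₁, HasDerivWithinAt (f j) (f' j t) (Icc t₀ t₁) t)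
    (hφ : ∀ t ∈ Icc t₀ t₁, HasDerivWithinAt φ (Φ (φ t)) (Icc t₀ t₁) t)
    (ha : ∀ i j, ∀ t ∈ Icc t₀ t₁, 0 ≤ a i j t)
    (hineq : ∀ i, ∀ t ∈ Icc t₀ t₁, (∑ j, a i j t * (f j t - f i t)) + Φ (f i t) ≤ f' i t)
    (hinit : ∀ j, φ t₀ ≤ f j t₀) {ε : ℝ} (hε : 0 < ε) :
    ∀ j, ∀ t ∈ Icc t₀ t₁, φ t - ε * Real.exp ((L + 1) * t) < f j t := by
  have hexp (t : ℝ) : HasDerivAt (fun t => ε * Real.exp ((L + 1) * t))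
      (ε * (Real.exp ((L + 1) * t) * (L + 1))) t := by
    simpa using (((hasDerivAt_id t).const_mul (L + 1 : ℝ)).exp).const_mul ε
  have hpos := forall_pos_of_deriv_pos_at_first_zero
    (h := fun j t => f j t - φ t + ε * Real.exp ((L + 1) * t))
    (h' := fun j t => f' j t - Φ (φ t) + ε * (Real.exp ((L + 1) * t) * (L + 1)))
    (fun j t ht => (((hf j t ht).sub (hφ t ht)).add (hexp t).hasDerivWithinAt).continuousWithinAt)
    (fun j t ht => (((hf j t (Ioc_subset_Icc_self ht)).sub (hφ t (Ioc_subset_Icc_self ht))).add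
      (hexp t).hasDerivWithinAt).mono (Icc_subset_Icc_right ht.2))
    (fun j => by linarith [hinit j, mul_pos hε (Real.exp_pos ((L + 1) * t₀))])
    ?_
  · intro j t ht
    linarith [hpos j t ht]
  intro i t ht hzero hnonneg
  have ht' := Ioc_subset_Icc_self ht
  set e := Real.exp ((L + 1) * t)
  have hcoupling : 0 ≤ ∑ j, a i j t * (f j t - f i t) := Finset.sum_nonneg fun j _ =>
    mul_nonneg (ha i j t ht') (by linarith [hnonneg j])
  have he : 0 < ε * e := mul_pos hε (Real.exp_pos _)
  have hgap : |f i t - φ t| = ε * e := by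
    rw [abs_of_nonpos (by linarith)]
    linarith
  have hlip : Φ (φ t) - Φ (f i t) ≤ L * (ε * e) := by
    have := hΦ.dist_le_mul (f i t) (hfK i ht') (φ t) (hφK ht')
    rw [Real.dist_eq, Real.dist_eq, hgap] at this
    linarith [neg_abs_le (Φ (f i t) - Φ (φ t))]
  have hslope : ε * (e * (L + 1)) = L * (ε * e) + ε * e := by ring
  linarith [hineq i t ht']

theorem le_of_coupled_differential_ineq_of_lipschitzOnWith {K : Set ℝ} {L : NNReal}
    (hΦ : LipschitzOnWith L Φ K) (hfK : ∀ j, MapsTo (f j) (Icc t₀ t₁) K)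
    (hφK : MapsTo φ (Icc t₀ t₁) K)
    (hf : ∀ j, ∀ t ∈ Icc t₀ t₁, HasDerivWithinAt (f j) (f' j t) (Icc t₀ t₁) t)
    (hφ : ∀ t ∈ Icc t₀ t₁, HasDerivWithinAt φ (Φ (φ t)) (Icc t₀ t₁) t)
    (ha : ∀ i j, ∀ t ∈ Icc t₀ t₁, 0 ≤ a i j t)
    (hineq : ∀ i, ∀ t ∈ Icc t₀ t₁, (∑ j, a i j t * (f j t - f i t)) + Φ (f i t) ≤ f' i t)
    (hinit : ∀ j, φ t₀ ≤ f j t₀) :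
    ∀ j, ∀ t ∈ Icc t₀ t₁, φ t ≤ f j t := by
  intro j t ht
  refine le_of_forall_pos_lt_add fun δ hδ => ?_
  have hexp := Real.exp_pos ((L + 1) * t)
  have := sub_exp_lt_of_coupled_differential_ineq hΦ hfK hφK hf hφ ha hineq hinit
    (div_pos hδ hexp) j t ht
  rwa [div_mul_cancel₀ _ hexp.ne', sub_lt_iff_lt_add] at this

theorem le_of_coupled_differential_ineq (hΦ : LocallyLipschitz Φ)
    (hf : ∀ j, ∀ t ∈ Icc t₀ t₁, HasDerivWithinAt (f j) (f' j t) (Icc t₀ t₁) t)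
    (hφ : ∀ t ∈ Icc t₀ t₁, HasDerivWithinAt φ (Φ (φ t)) (Icc t₀ t₁) t)
    (ha : ∀ i j, ∀ t ∈ Icc t₀ t₁, 0 ≤ a i j t)
    (hineq : ∀ i, ∀ t ∈ Icc t₀ t₁, (∑ j, a i j t * (f j t - f i t)) + Φ (f i t) ≤ f' i t)
    (hinit : ∀ j, φ t₀ ≤ f j t₀) :
    ∀ j, ∀ t ∈ Icc t₀ t₁, φ t ≤ f j t := by
  have hK : IsCompact ((⋃ j, f j '' Icc t₀ t₁) ∪ φ '' Icc t₀ t₁) :=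
    (isCompact_iUnion fun j => isCompact_Icc.image_of_continuousOn fun t ht =>
      (hf j t ht).continuousWithinAt).union
    (isCompact_Icc.image_of_continuousOn fun t ht => (hφ t ht).continuousWithinAt)
  obtain ⟨L, hL⟩ := hΦ.locallyLipschitzOn.exists_lipschitzOnWith_of_compact hK
  exact le_of_coupled_differential_ineq_of_lipschitzOnWith hL
    (fun j t ht => .inl (mem_iUnion.2 ⟨j, mem_image_of_mem _ ht⟩))
    (fun t ht => .inr (mem_image_of_mem _ ht)) hf hφ ha hineq hinit

end Comparison

theorem stmt_0_general {V : Type*} [Fintype V]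
    (T : EReal)
    (C₁ : ℝ) (f f' : V → ℝ → ℝ)
    (a : V → V → ℝ → ℝ) (Φ : ℝ → ℝ)
    (S : Set ℝ) (hS : S = {t : ℝ | 0 ≤ t ∧ (t : EReal) < T})
    (hderiv : ∀ i, ∀ t ∈ S, HasDerivWithinAt (f i) (f' i t) S t)
    (hanonneg : ∀ i j, ∀ t ∈ S, 0 ≤ a i j t)
    (hΦ : LocallyLipschitz Φ)
    (hineq : ∀ i, ∀ t ∈ S, f' i t ≥ (∑ j, a i j t * (f j t - f i t)) + Φ (f i t))
    (hinit : ∀ i, f i 0 ≥ C₁)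
    (φ : ℝ → ℝ)
    (hφderiv : ∀ t ∈ S, HasDerivWithinAt φ (Φ (φ t)) S t)
    (hφ0 : φ 0 = C₁) :
    ∀ i, ∀ t ∈ S, f i t ≥ φ t := by
  intro i t ht
  subst hS
  obtain ⟨ht0, htT⟩ := ht
  have hsub : Icc 0 t ⊆ {s : ℝ | 0 ≤ s ∧ (s : EReal) < T} := fun s hs =>
    ⟨hs.1, (EReal.coe_le_coe_iff.2 hs.2).trans_lt htT⟩
  exact le_of_coupled_differential_ineq hΦ (fun j s hs => (hderiv j s (hsub hs)).mono hsub)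
    (fun s hs => (hφderiv s (hsub hs)).mono hsub) (fun j k s hs => hanonneg j k s (hsub hs))
    (fun j s hs => hineq j s (hsub hs)) (fun j => hφ0 ▸ hinit j) i t ⟨ht0, le_rfl⟩

/-- Discrete maximum principle (lower bound version): a finite family of ODE
differential inequalities coupled through nonnegative coefficients, compared
against the scalar ODE `φ' = Φ(φ)` with the same initial bound. -/
theorem stmt_0 {V : Type*} [Fintype V] [Nonempty V]
    (T : EReal) (hT : 0 < T)
    (C₁ : ℝ) (f f' : V → ℝ → ℝ)
    (a : V → V → ℝ → ℝ) (Φ : ℝ → ℝ)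
    (S : Set ℝ) (hS : S = {t : ℝ | 0 ≤ t ∧ (t : EReal) < T})
    (hderiv : ∀ i, ∀ t ∈ S, HasDerivWithinAt (f i) (f' i t) S t)
    (hacont : ∀ i j, ContinuousOn (a i j) S)
    (hanonneg : ∀ i j, ∀ t ∈ S, 0 ≤ a i j t)
    (hΦ : LocallyLipschitz Φ)
    (hineq : ∀ i, ∀ t ∈ S, f' i t ≥ (∑ j, a i j t * (f j t - f i t)) + Φ (f i t))
    (hinit : ∀ i, f i 0 ≥ C₁)
    (φ : ℝ → ℝ)
    (hφderiv : ∀ t ∈ S, HasDerivWithinAt φ (Φ (φ t)) S t)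
    (hφ0 : φ 0 = C₁) :
    ∀ i, ∀ t ∈ S, f i t ≥ φ t :=
  stmt_0_general T C₁ f f' a Φ S hS hderiv hanonneg hΦ hineq hinit φ hφderiv hφ0
end

section
/- Let V be a finite nonempty index set, T ∈ (0, ∞], and C₂ ∈ ℝ. Let f : V × [0,T) → ℝ be such that t ↦ f_i(t) is differentiable for each i ∈ V, let a_{ij} : [0,T) → ℝ (for i, j ∈ V) be continuous functions with a_{ij}(t) ≥ 0 for all i, j, t, and let Φ : ℝ → ℝ be locally Lipschitz. Assume that for all i ∈ V and t ∈ [0,T), d/dt f_i(t) ≤ Σ_{j∈V} a_{ij}(t)(f_j(t) − f_i(t)) + Φ(f_i(t)), and that f_i(0) ≤ C₂ for all i ∈ V. If ψ : [0,T) → ℝ is differentiable with ψ'(t) = Φ(ψ(t)) for all t ∈ [0,T) and ψ(0) = C₂, then f_i(t) ≤ ψ(t) for all i ∈ V and t ∈ [0,T). -/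
open Filter Set Metric Topology

lemma locLip_compact_aux (Φ : ℝ → ℝ) (hΦ : LocallyLipschitz Φ) (s : Set ℝ)
    (hs : IsCompact s) :
    ∃ K : ℝ, 0 ≤ K ∧ ∃ δ : ℝ, 0 < δ ∧
      ∀ p ∈ s, ∀ d : ℝ, |d| ≤ δ → |Φ (p + d) - Φ p| ≤ K * |d| := by
  rcases s.eq_empty_or_nonempty with rfl | ⟨p₀, hp₀⟩
  · exact ⟨0, le_refl 0, 1, one_pos, by simp⟩
  choose Kf U hU hL using hΦ
  have hr : ∀ p : ℝ, ∃ r > 0, ball p r ⊆ U p := fun p => Metric.mem_nhds_iff.1 (hU p)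
  choose r hrpos hball using hr
  obtain ⟨F, hFs, hcov⟩ := hs.elim_nhds_subcover (fun p => ball p (r p / 2))
    (fun p _ => ball_mem_nhds p (half_pos (hrpos p)))
  have hFne : F.Nonempty := by
    rcases mem_iUnion₂.1 (hcov hp₀) with ⟨q, hq, -⟩
    exact ⟨q, hq⟩
  refine ⟨F.sup' hFne (fun p => (Kf p : ℝ)), ?_, F.inf' hFne (fun p => r p / 2), ?_, ?_⟩
  · obtain ⟨q, hq⟩ := hFne
    exact le_trans (Kf q).coe_nonneg (Finset.le_sup' (fun p => ((Kf p : ℝ))) hq)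
  · rw [Finset.lt_inf'_iff]
    intro p _
    exact half_pos (hrpos p)
  · intro p hp d hd
    rcases mem_iUnion₂.1 (hcov hp) with ⟨q, hq, hpq⟩
    have hdq : F.inf' hFne (fun p => r p / 2) ≤ r q / 2 := Finset.inf'_le _ hq
    have hp' : p ∈ ball q (r q) := by
      rw [mem_ball] at hpq ⊢
      linarith [hpq, hrpos q]
    have hpd : p + d ∈ ball q (r q) := by
      rw [mem_ball, Real.dist_eq] at hpq ⊢
      have : |p + d - q| ≤ |d| + |p - q| := by
        have := abs_add_le d (p - q); rw [show d + (p - q) = p + d - q by ring] at this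
        exact this
      linarith
    have hlip := (hL q) (hball q hpd) (hball q hp')
    rw [edist_dist, edist_dist, ← ENNReal.ofReal_coe_nnreal,
      ← ENNReal.ofReal_mul (Kf q).coe_nonneg] at hlip
    have hdist := (ENNReal.ofReal_le_ofReal_iff (by positivity)).1 hlip
    rw [Real.dist_eq, Real.dist_eq, show p + d - p = d by ring] at hdist
    calc |Φ (p + d) - Φ p| ≤ (Kf q : ℝ) * |d| := hdist
      _ ≤ F.sup' hFne (fun p => (Kf p : ℝ)) * |d| :=
        mul_le_mul_of_nonneg_right (Finset.le_sup' (fun p => ((Kf p : ℝ))) hq) (abs_nonneg d)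


/-- Discrete maximum principle (upper bound version): a finite family of ODE
differential inequalities coupled through nonnegative coefficients, compared
against the scalar ODE `ψ' = Φ(ψ)` with the same initial bound. -/
theorem stmt_1 {V : Type*} [Fintype V] [Nonempty V]
    (T : EReal) (hT : 0 < T)
    (C₂ : ℝ) (f f' : V → ℝ → ℝ)
    (a : V → V → ℝ → ℝ) (Φ : ℝ → ℝ)
    (S : Set ℝ) (hS : S = {t : ℝ | 0 ≤ t ∧ (t : EReal) < T})
    (hderiv : ∀ i, ∀ t ∈ S, HasDerivWithinAt (f i) (f' i t) S t)
    (hacont : ∀ i j, ContinuousOn (a i j) S)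
    (hanonneg : ∀ i j, ∀ t ∈ S, 0 ≤ a i j t)
    (hΦ : LocallyLipschitz Φ)
    (hineq : ∀ i, ∀ t ∈ S, f' i t ≤ (∑ j, a i j t * (f j t - f i t)) + Φ (f i t))
    (hinit : ∀ i, f i 0 ≤ C₂)
    (ψ : ℝ → ℝ)
    (hψderiv : ∀ t ∈ S, HasDerivWithinAt ψ (Φ (ψ t)) S t)
    (hψ0 : ψ 0 = C₂) :
    ∀ i, ∀ t ∈ S, f i t ≤ ψ t := by
  have huniv : (Finset.univ : Finset V).Nonempty := Finset.univ_nonempty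
  set F : ℝ → ℝ := fun x => Finset.univ.sup' huniv (fun i => f i x) with hFdef
  have hle : ∀ i x, f i x ≤ F x := fun i x =>
    Finset.le_sup' (fun i => f i x) (Finset.mem_univ i)
  have hAne : ∀ x, (Finset.univ.filter (fun i => f i x = F x)).Nonempty := by
    intro x
    obtain ⟨i, -, hi⟩ := Finset.exists_mem_eq_sup' huniv (fun i => f i x)
    exact ⟨i, Finset.mem_filter.2 ⟨Finset.mem_univ i, hi.symm⟩⟩
  set F' : ℝ → ℝ :=
    fun x => (Finset.univ.filter (fun i => f i x = F x)).sup' (hAne x) (fun i => f' i x)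
    with hF'def
  have hfc : ∀ i, ContinuousOn (f i) S := fun i x hx => (hderiv i x hx).continuousWithinAt
  have hψc : ContinuousOn ψ S := fun x hx => (hψderiv x hx).continuousWithinAt
  intro i₀ t ht
  have ht0 : 0 ≤ t := by rw [hS] at ht; exact ht.1
  have htT : (t : EReal) < T := by rw [hS] at ht; exact ht.2
  have hsub : Icc 0 t ⊆ S := by
    rw [hS]; intro x hx
    exact ⟨hx.1, lt_of_le_of_lt (EReal.coe_le_coe_iff.2 hx.2) htT⟩
  -- neighborhood facts at points of `Ico 0 t`
  have hIooS : ∀ x ∈ Ico 0 t, Ioo x t ⊆ S := fun x hx y hy =>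
    hsub ⟨le_of_lt (lt_of_le_of_lt hx.1 hy.1), hy.2.le⟩
  have hSdiff : ∀ x ∈ Ico 0 t, S \ {x} ∈ 𝓝[>] x := by
    intro x hx
    refine Filter.mem_of_superset (Ioo_mem_nhdsGT_of_mem ⟨le_refl x, hx.2⟩) ?_
    exact fun y hy => ⟨hIooS x hx hy, (hy.1.ne' : y ≠ x)⟩
  have hSIoi : ∀ x ∈ Ico 0 t, S ∈ 𝓝[>] x := by
    intro x hx
    exact Filter.mem_of_superset (Ioo_mem_nhdsGT_of_mem ⟨le_refl x, hx.2⟩) (hIooS x hx)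
  have hSIci : ∀ x ∈ Ico 0 t, S ∈ 𝓝[Ici x] x := by
    intro x hx
    rw [mem_nhdsWithin]
    refine ⟨Ioo (x - 1) t, isOpen_Ioo, ⟨by linarith [hx.1], hx.2⟩, ?_⟩
    rintro y ⟨hy1, hy2⟩
    exact hsub ⟨le_trans hx.1 hy2, hy1.2.le⟩
  -- Lipschitz data near the compact curve
  obtain ⟨K, hK0, δ, hδ0, hKd⟩ := locLip_compact_aux Φ hΦ (ψ '' Icc 0 t)
    (isCompact_Icc.image_of_continuousOn (hψc.mono hsub))
  have E0 : (0 : ℝ) < Real.exp ((K + 1) * t) := Real.exp_pos _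
  have key : ∀ ε : ℝ, 0 < ε → ε * Real.exp ((K + 1) * t) ≤ δ →
      ∀ x ∈ Icc 0 t, F x ≤ ψ x + ε * Real.exp ((K + 1) * x) := by
    intro ε hε hεδ
    have hd' : ∀ x ∈ Icc 0 t,
        0 < ε * Real.exp ((K + 1) * x) ∧ ε * Real.exp ((K + 1) * x) ≤ δ := by
      intro x hx
      refine ⟨by positivity, le_trans ?_ hεδ⟩
      have h1 : Real.exp ((K + 1) * x) ≤ Real.exp ((K + 1) * t) :=
        Real.exp_le_exp.2 (mul_le_mul_of_nonneg_left hx.2 (by linarith))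
      exact mul_le_mul_of_nonneg_left h1 hε.le
    have hc : ContinuousOn F (Icc 0 t) :=
      ContinuousOn.finset_sup'_apply huniv (fun i _ => (hfc i).mono hsub)
    have hslope : ∀ x ∈ Ico 0 t, ∀ r, F' x < r →
        ∃ᶠ z in 𝓝[>] x, slope F x z < r := by
      intro x hx r hr
      have hxS : x ∈ S := hsub ⟨hx.1, hx.2.le⟩
      have hall : ∀ᶠ z in 𝓝[>] x, ∀ i, f i z < F x + r * (z - x) := by
        rw [Filter.eventually_all]
        intro i
        by_cases hiA : f i x = F x
        · have htd : Filter.Tendsto (slope (f i) x) (𝓝[>] x) (𝓝 (f' i x)) :=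
            (hasDerivWithinAt_iff_tendsto_slope.1 (hderiv i x hxS)).mono_left
              (nhdsWithin_le_iff.2 (hSdiff x hx))
          have hfi : f' i x ≤ F' x :=
            Finset.le_sup' (fun i => f' i x)
              (Finset.mem_filter.2 ⟨Finset.mem_univ i, hiA⟩)
          have hev := htd.eventually_lt_const (lt_of_le_of_lt hfi hr)
          filter_upwards [hev, self_mem_nhdsWithin] with z hz hz'
          rw [slope_def_field, div_lt_iff₀ (sub_pos.2 hz')] at hz
          linarith
        · have hlt : f i x < F x := lt_of_le_of_ne (hle i x) hiA
          have hcont : Filter.Tendsto (f i) (𝓝[>] x) (𝓝 (f i x)) :=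
            (hfc i x hxS).mono_left (nhdsWithin_le_iff.2 (hSIoi x hx))
          have h1 : ∀ᶠ z in 𝓝[>] x, f i z < (f i x + F x) / 2 :=
            hcont.eventually_lt_const (by linarith)
          have htend2 : Filter.Tendsto (fun z => F x + r * (z - x)) (𝓝[>] x) (𝓝 (F x)) := by
            have h3 : Filter.Tendsto (fun z : ℝ => F x + r * (z - x)) (𝓝 x)
                (𝓝 (F x + r * (x - x))) := by
              exact (continuous_const.add
                ((continuous_const.mul (continuous_id.sub continuous_const)))).tendsto x
            simpa using h3.mono_left nhdsWithin_le_nhds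
          have h2 : ∀ᶠ z in 𝓝[>] x, (f i x + F x) / 2 < F x + r * (z - x) :=
            htend2.eventually_const_lt (by linarith)
          filter_upwards [h1, h2] with z hz1 hz2
          linarith
      refine Filter.Eventually.frequently ?_
      filter_upwards [hall, self_mem_nhdsWithin] with z hz hz'
      have hzx : (0 : ℝ) < z - x := sub_pos.2 hz'
      have hFz : F z < F x + r * (z - x) :=
        (Finset.sup'_lt_iff huniv).2 (fun i _ => hz i)
      rw [slope_def_field, div_lt_iff₀ hzx]
      linarith
    have h0 : F 0 ≤ ψ 0 + ε * Real.exp ((K + 1) * 0) := by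
      have hF0 : F 0 ≤ C₂ := Finset.sup'_le huniv (fun i => f i 0) (fun i _ => hinit i)
      rw [hψ0]
      have : (0:ℝ) < ε * Real.exp ((K + 1) * 0) := by positivity
      linarith
    have hBc : ContinuousOn (fun x => ψ x + ε * Real.exp ((K + 1) * x)) (Icc 0 t) :=
      (hψc.mono hsub).add
        ((continuous_const.mul (Real.continuous_exp.comp
          (continuous_const.mul continuous_id))).continuousOn)
    have hB' : ∀ x ∈ Ico 0 t, HasDerivWithinAt (fun x => ψ x + ε * Real.exp ((K + 1) * x))
        (Φ (ψ x) + ε * ((K + 1) * Real.exp ((K + 1) * x))) (Ici x) x := by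
      intro x hx
      have hxS : x ∈ S := hsub ⟨hx.1, hx.2.le⟩
      have h1 : HasDerivWithinAt ψ (Φ (ψ x)) (Ici x) x :=
        (hψderiv x hxS).mono_of_mem_nhdsWithin (hSIci x hx)
      have h3 : HasDerivAt (fun y : ℝ => (K + 1) * y) (K + 1) x := by
        simpa using (hasDerivAt_id x).const_mul (K + 1)
      have h4 := (h3.exp).const_mul ε
      refine h1.add (HasDerivAt.hasDerivWithinAt ?_)
      rw [show ε * ((K + 1) * Real.exp ((K + 1) * x)) = ε * (Real.exp ((K + 1) * x) * (K + 1)) by ring]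
      exact h4
    have hbound : ∀ x ∈ Ico 0 t, F x = ψ x + ε * Real.exp ((K + 1) * x) →
        F' x < Φ (ψ x) + ε * ((K + 1) * Real.exp ((K + 1) * x)) := by
      intro x hx hFB
      have hxS : x ∈ S := hsub ⟨hx.1, hx.2.le⟩
      obtain ⟨i, hiA, hF'⟩ := Finset.exists_mem_eq_sup' (hAne x) (fun i => f' i x)
      have hfix : f i x = F x := (Finset.mem_filter.1 hiA).2
      obtain ⟨hd0, hdδ⟩ := hd' x (Ico_subset_Icc_self hx)
      have hsum : (∑ j, a i j x * (f j x - f i x)) ≤ 0 :=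
        Finset.sum_nonpos fun j _ =>
          mul_nonpos_of_nonneg_of_nonpos (hanonneg i j x hxS)
            (by linarith [hle j x, hfix])
      have hΦb : Φ (f i x) ≤ Φ (ψ x) + K * (ε * Real.exp ((K + 1) * x)) := by
        have hmemIm : ψ x ∈ ψ '' Icc 0 t := mem_image_of_mem ψ (Ico_subset_Icc_self hx)
        have habs := hKd (ψ x) hmemIm (ε * Real.exp ((K + 1) * x))
          (by rw [abs_of_pos hd0]; exact hdδ)
        have h5 : Φ (ψ x + ε * Real.exp ((K + 1) * x)) - Φ (ψ x)
            ≤ K * |ε * Real.exp ((K + 1) * x)| := le_trans (le_abs_self _) habs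
        rw [abs_of_pos hd0] at h5
        have hfix' : f i x = ψ x + ε * Real.exp ((K + 1) * x) := by rw [hfix, hFB]
        rw [hfix']
        linarith
      have hfi' := hineq i x hxS
      have hring : ε * ((K + 1) * Real.exp ((K + 1) * x))
          = (K + 1) * (ε * Real.exp ((K + 1) * x)) := by ring
      have hF'x : F' x = f' i x := hF'
      rw [hF'x, hring]
      nlinarith [hd0]
    intro x hx
    exact image_le_of_liminf_slope_right_lt_deriv_boundary' hc hslope h0 hBc hB' hbound hx
  have hmain : ∀ η : ℝ, 0 < η → f i₀ t ≤ ψ t + η := by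
    intro η hη
    set ε := min (δ / Real.exp ((K + 1) * t)) (η / Real.exp ((K + 1) * t)) with hε
    have hε0 : 0 < ε := lt_min (div_pos hδ0 E0) (div_pos hη E0)
    have h1 : ε * Real.exp ((K + 1) * t) ≤ δ := by
      calc ε * Real.exp ((K + 1) * t)
          ≤ (δ / Real.exp ((K + 1) * t)) * Real.exp ((K + 1) * t) :=
            mul_le_mul_of_nonneg_right (min_le_left _ _) E0.le
        _ = δ := div_mul_cancel₀ _ E0.ne'
    have h3 : ε * Real.exp ((K + 1) * t) ≤ η := by
      calc ε * Real.exp ((K + 1) * t)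
          ≤ (η / Real.exp ((K + 1) * t)) * Real.exp ((K + 1) * t) :=
            mul_le_mul_of_nonneg_right (min_le_right _ _) E0.le
        _ = η := div_mul_cancel₀ _ E0.ne'
    have h2 := key ε hε0 h1 t ⟨ht0, le_refl t⟩
    have h4 := hle i₀ t
    linarith
  exact le_of_forall_pos_le_add hmain
end

section
/- Let V be a finite nonempty index set and T ∈ (0, ∞]. Let f : V × [0,T) → ℝ be such that t ↦ f_i(t) is differentiable for each i ∈ V, let a_{ij} : [0,T) → ℝ (for i, j ∈ V) be continuous functions with a_{ij}(t) ≥ 0 for all i, j, t, and for each i ∈ V let Φ_i : ℝ → ℝ be locally Lipschitz with Φ_i(0) = 0. (1) If d/dt f_i(t) ≥ Σ_{j∈V} a_{ij}(t)(f_j(t) − f_i(t)) + Φ_i(f_i(t)) for all i, t and f_i(0) ≥ 0 for all i, then f_i(t) ≥ 0 for all i ∈ V and t ∈ [0,T). (2) If d/dt f_i(t) ≤ Σ_{j∈V} a_{ij}(t)(f_j(t) − f_i(t)) + Φ_i(f_i(t)) for all i, t and f_i(0) ≤ 0 for all i, then f_i(t) ≤ 0 for all i ∈ V and t ∈ [0,T).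 -/
/-!
Compare every `f i` with the barrier `ε e^{Kt}`, where `K` exceeds a constant `L` with
`|Φ i y| ≤ L |y|` near `0`. At the first time some `f i` touches the barrier, `f i` is a largest
component, so the coupling term `∑ j, a i j (f j - f i)` is `≤ 0` and
`f' i ≤ Φ i (f i) ≤ L ε e^{Kt} < K ε e^{Kt}`, while touching from below forces `f' i ≥ K ε e^{Kt}`.
Hence `f i < ε e^{Kt}` for all small `ε`, so `f i ≤ 0`. The case `f i ≥ 0` is the same statement
for `-f` and the reaction terms `y ↦ -Φ i (-y)`.
-/

open Filter Set Topology Asymptotics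

theorem LocallyLipschitz.isBigO_id_of_map_zero {E F : Type*} [SeminormedAddCommGroup E]
    [SeminormedAddCommGroup F] {Φ : E → F} (hΦ : LocallyLipschitz Φ) (hΦ0 : Φ 0 = 0) :
    Φ =O[𝓝 0] id := by
  obtain ⟨K, t, ht, hK⟩ := hΦ 0
  refine IsBigO.of_bound K (mem_of_superset ht fun y hy => ?_)
  simpa [hΦ0, dist_zero_right] using hK.dist_le_mul y hy 0 (mem_of_mem_nhds ht)

theorem HasDerivWithinAt.nonneg_of_isMaxOn_Icc {g : ℝ → ℝ} {d a x : ℝ}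
    (hg : HasDerivWithinAt g d (Icc a x) x) (hax : a < x) (hmax : IsMaxOn g (Icc a x) x) :
    0 ≤ d := by
  have hseg : segment ℝ x a ⊆ Icc a x :=
    (convex_Icc a x).segment_subset (right_mem_Icc.2 hax.le) (left_mem_Icc.2 hax.le)
  have h := hmax.localize.hasFDerivWithinAt_nonpos hg.hasFDerivWithinAt
    (sub_mem_posTangentConeAt_of_segment_subset hseg)
  rw [ContinuousLinearMap.toSpanSingleton_apply, smul_eq_mul] at h
  nlinarith

theorem exists_forall_le_mul_of_isBigO_id {ι : Type*} [Finite ι] {Φ : ι → ℝ → ℝ}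
    (hΦ : ∀ i, Φ i =O[𝓝 0] id) :
    ∃ L δ : ℝ, 0 < δ ∧ ∀ i, ∀ y, 0 < y → y < δ → Φ i y ≤ L * y := by
  choose L hL using fun i => (hΦ i).bound
  obtain ⟨L₀, hL₀⟩ := Finite.exists_le L
  obtain ⟨δ, hδ, hΦδ⟩ := Metric.eventually_nhds_iff.1 (eventually_all.2 hL)
  refine ⟨L₀, δ, hδ, fun i y hy hyδ => ?_⟩
  have hbound := hΦδ (show dist y 0 < δ by rwa [dist_zero_right, Real.norm_eq_abs,
    abs_of_pos hy]) i
  rw [Real.norm_eq_abs, id, Real.norm_eq_abs, abs_of_pos hy] at hbound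
  nlinarith [le_abs_self (Φ i y), hL₀ i]

theorem exists_first_zero_of_continuousOn {ι : Type*} [Finite ι] {g : ι → ℝ → ℝ} {a b : ℝ}
    (hg : ∀ i, ContinuousOn (g i) (Icc a b)) (ha : ∀ i, g i a < 0)
    (hnonneg : ∃ i, ∃ t ∈ Icc a b, 0 ≤ g i t) :
    ∃ x ∈ Ioc a b, ∃ i, g i x = 0 ∧ (∀ j, g j x ≤ 0) ∧ ∀ y ∈ Ico a x, g i y < 0 := by
  obtain ⟨k, t, ht, hkt⟩ := hnonneg
  set A := ⋃ i, Icc a b ∩ g i ⁻¹' Ici 0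
  have hA : IsClosed A := isClosed_iUnion_of_finite fun i =>
    (hg i).preimage_isClosed_of_isClosed isClosed_Icc isClosed_Ici
  have hAbdd : BddBelow A := ⟨a, fun s hs => (mem_iUnion.1 hs).elim fun _ h => h.1.1⟩
  have hxA : sInf A ∈ A := hA.csInf_mem ⟨t, mem_iUnion.2 ⟨k, ht, hkt⟩⟩ hAbdd
  set x := sInf A
  obtain ⟨l, ⟨hxa, hxb⟩, hlx⟩ := mem_iUnion.1 hxA
  have hax : a < x := hxa.lt_of_ne fun h => (ha l).not_ge (h ▸ hlx)
  have hbefore : ∀ j, ∀ y ∈ Ico a x, g j y < 0 := fun j y hy => not_le.1 fun h =>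
    hy.2.not_ge (csInf_le hAbdd (mem_iUnion.2 ⟨j, ⟨hy.1, hy.2.le.trans hxb⟩, h⟩))
  have : Nonempty ι := ⟨k⟩
  obtain ⟨i, hi⟩ := Finite.exists_max fun j => g j x
  have hix : g i x ≤ 0 := by
    have hcl : x ∈ closure (Ico a x) := by rw [closure_Ico hax.ne]; exact right_mem_Icc.2 hax.le
    have hcont : ContinuousWithinAt (g i) (Ico a x) x :=
      (hg i x ⟨hxa, hxb⟩).mono (Ico_subset_Icc_self.trans (Icc_subset_Icc_right hxb))
    exact hcont.closure_le hcl continuousWithinAt_const fun y hy => (hbefore i y hy).le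
  exact ⟨x, ⟨hax, hxb⟩, i, le_antisymm hix ((show (0:ℝ) ≤ g l x from hlx).trans (hi l)),
    fun j => (hi j).trans hix, hbefore i⟩

theorem forall_lt_of_deriv_lt_at_contact {ι : Type*} [Finite ι] {f f' : ι → ℝ → ℝ}
    {B B' : ℝ → ℝ} {a b : ℝ}
    (hf : ∀ i, ContinuousOn (f i) (Icc a b))
    (hf' : ∀ i, ∀ x ∈ Ioc a b, HasDerivWithinAt (f i) (f' i x) (Icc a b) x)
    (hB : ContinuousOn B (Icc a b))
    (hB' : ∀ x ∈ Ioc a b, HasDerivWithinAt B (B' x) (Icc a b) x)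
    (ha : ∀ i, f i a < B a)
    (hcontact : ∀ x ∈ Ioc a b, ∀ i, f i x = B x → (∀ j, f j x ≤ B x) → f' i x < B' x) :
    ∀ i, ∀ t ∈ Icc a b, f i t < B t := by
  by_contra! h
  obtain ⟨k, t, ht, hkt⟩ := h
  obtain ⟨x, hx, i, hix, hjx, hbefore⟩ := exists_first_zero_of_continuousOn
    (g := fun i t => f i t - B t) (fun i => (hf i).sub hB) (fun i => sub_neg.2 (ha i))
    ⟨k, t, ht, sub_nonneg.2 hkt⟩
  have hmax : IsMaxOn (fun t => f i t - B t) (Icc a x) x := by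
    intro y hy
    show f i y - B y ≤ f i x - B x
    rcases (hy.2 : y ≤ x).eq_or_lt with rfl | hyx
    · exact le_rfl
    · exact ((hbefore y ⟨hy.1, hyx⟩).trans_eq hix.symm).le
  have hderiv_nonneg : 0 ≤ f' i x - B' x :=
    (((hf' i x hx).sub (hB' x hx)).mono (Icc_subset_Icc_right hx.2)).nonneg_of_isMaxOn_Icc
      hx.1 hmax
  have := hcontact x hx i (sub_eq_zero.1 hix) fun j => sub_nonpos.1 (hjx j)
  linarith

section CoupledSystem

variable {ι : Type*} [Fintype ι] {f f' : ι → ℝ → ℝ} {c : ι → ι → ℝ → ℝ} {Φ : ι → ℝ → ℝ}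
  {a b : ℝ}

theorem lt_mul_exp_of_deriv_le_laplacian_add {L K δ ε : ℝ}
    (hf : ∀ i, ∀ t ∈ Icc a b, HasDerivWithinAt (f i) (f' i t) (Icc a b) t)
    (hc : ∀ i j, ∀ t ∈ Ioc a b, 0 ≤ c i j t)
    (hΦ : ∀ i, ∀ y, 0 < y → y < δ → Φ i y ≤ L * y) (hLK : L < K) (hK : 0 ≤ K)
    (hε : 0 < ε) (hεδ : ε * Real.exp (K * b) < δ)
    (hineq : ∀ i, ∀ t ∈ Ioc a b, f' i t ≤ ∑ j, c i j t * (f j t - f i t) + Φ i (f i t))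
    (hinit : ∀ i, f i a ≤ 0) :
    ∀ i, ∀ t ∈ Icc a b, f i t < ε * Real.exp (K * t) := by
  have hB : ∀ x, HasDerivAt (fun t => ε * Real.exp (K * t)) (K * (ε * Real.exp (K * x))) x :=
    fun x => (((hasDerivAt_id x).const_mul K).exp.const_mul ε).congr_deriv
      (by simp only [id, mul_one]; ring)
  refine forall_lt_of_deriv_lt_at_contact (fun i t ht => (hf i t ht).continuousWithinAt)
    (fun i x hx => hf i x (Ioc_subset_Icc_self hx))
    (fun t _ => (hB t).continuousAt.continuousWithinAt)
    (fun x _ => (hB x).hasDerivWithinAt) (fun i => (hinit i).trans_lt (by positivity)) ?_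
  intro x hx i hix hjx
  set β := ε * Real.exp (K * x)
  have hβ : 0 < β := by positivity
  have hβδ : β < δ := lt_of_le_of_lt (mul_le_mul_of_nonneg_left
    (Real.exp_le_exp.2 (mul_le_mul_of_nonneg_left hx.2 hK)) hε.le) hεδ
  have hcoupling : ∑ j, c i j x * (f j x - f i x) ≤ 0 :=
    Finset.sum_nonpos fun j _ => mul_nonpos_of_nonneg_of_nonpos (hc i j x hx)
      (by linarith [hjx j])
  calc f' i x ≤ ∑ j, c i j x * (f j x - f i x) + Φ i (f i x) := hineq i x hx
    _ ≤ L * β := by rw [hix] at hcoupling ⊢; linarith [hΦ i β hβ hβδ]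
    _ < K * β := by gcongr

theorem nonpos_of_deriv_le_laplacian_add
    (hf : ∀ i, ∀ t ∈ Icc a b, HasDerivWithinAt (f i) (f' i t) (Icc a b) t)
    (hc : ∀ i j, ∀ t ∈ Ioc a b, 0 ≤ c i j t)
    (hΦ : ∀ i, Φ i =O[𝓝 0] id)
    (hineq : ∀ i, ∀ t ∈ Ioc a b, f' i t ≤ ∑ j, c i j t * (f j t - f i t) + Φ i (f i t))
    (hinit : ∀ i, f i a ≤ 0) :
    ∀ i, ∀ t ∈ Icc a b, f i t ≤ 0 := by
  obtain ⟨L, δ, hδ, hΦL⟩ := exists_forall_le_mul_of_isBigO_id hΦ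
  set K := |L| + 1
  have hLK : L < K := by linarith [le_abs_self L]
  have hK : 0 ≤ K := by positivity
  intro i t ht
  have hlim : Tendsto (fun ε => ε * Real.exp (K * t)) (𝓝[>] 0) (𝓝 0) :=
    (Continuous.tendsto' (f := fun ε => ε * Real.exp (K * t)) (by fun_prop) 0 0
      (zero_mul _)).mono_left nhdsWithin_le_nhds
  refine ge_of_tendsto hlim ?_
  filter_upwards [Ioo_mem_nhdsGT (div_pos hδ (Real.exp_pos (K * b)))] with ε hε
  have hεδ : ε * Real.exp (K * b) < δ := (lt_div_iff₀ (Real.exp_pos _)).1 hε.2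
  exact (lt_mul_exp_of_deriv_le_laplacian_add hf hc hΦL hLK hK hε.1 hεδ hineq hinit i t ht).le

theorem nonneg_of_laplacian_add_le_deriv
    (hf : ∀ i, ∀ t ∈ Icc a b, HasDerivWithinAt (f i) (f' i t) (Icc a b) t)
    (hc : ∀ i j, ∀ t ∈ Ioc a b, 0 ≤ c i j t)
    (hΦ : ∀ i, Φ i =O[𝓝 0] id)
    (hineq : ∀ i, ∀ t ∈ Ioc a b, ∑ j, c i j t * (f j t - f i t) + Φ i (f i t) ≤ f' i t)
    (hinit : ∀ i, 0 ≤ f i a) :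
    ∀ i, ∀ t ∈ Icc a b, 0 ≤ f i t := by
  have hΦneg : ∀ i, (fun y => -Φ i (-y)) =O[𝓝 0] id := fun i =>
    (show (fun y => -Φ i (-y)) =O[𝓝 0] fun y => -id y from
      ((hΦ i).comp_tendsto (continuous_neg.tendsto' 0 0 neg_zero)).neg_left).of_neg_right
  have hineq_neg : ∀ i, ∀ t ∈ Ioc a b, -f' i t ≤
      ∑ j, c i j t * (-f j t - -f i t) + -Φ i (-(-f i t)) := fun i t ht => by
    have hsum : ∑ j, c i j t * (-f j t - -f i t) = -∑ j, c i j t * (f j t - f i t) := by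
      rw [← Finset.sum_neg_distrib]
      exact Finset.sum_congr rfl fun j _ => by ring
    rw [hsum, neg_neg]
    linarith [hineq i t ht]
  intro i t ht
  have := nonpos_of_deriv_le_laplacian_add (fun i t ht => (hf i t ht).neg) hc hΦneg hineq_neg
    (fun i => neg_nonpos.2 (hinit i)) i t ht
  exact neg_nonpos.1 this

end CoupledSystem

theorem stmt_2_general {V : Type*} [Fintype V]
    (T : EReal)
    (f f' : V → ℝ → ℝ)
    (a : V → V → ℝ → ℝ) (Φ : V → ℝ → ℝ)
    (S : Set ℝ) (hS : S = {t : ℝ | 0 ≤ t ∧ (t : EReal) < T})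
    (hderiv : ∀ i, ∀ t ∈ S, HasDerivWithinAt (f i) (f' i t) S t)
    (hanonneg : ∀ i j, ∀ t ∈ S, 0 ≤ a i j t)
    (hΦ : ∀ i, LocallyLipschitz (Φ i))
    (hΦ0 : ∀ i, Φ i 0 = 0) :
    ((∀ i, ∀ t ∈ S, f' i t ≥ (∑ j, a i j t * (f j t - f i t)) + Φ i (f i t)) →
      (∀ i, f i 0 ≥ 0) → ∀ i, ∀ t ∈ S, f i t ≥ 0) ∧
    ((∀ i, ∀ t ∈ S, f' i t ≤ (∑ j, a i j t * (f j t - f i t)) + Φ i (f i t)) →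
      (∀ i, f i 0 ≤ 0) → ∀ i, ∀ t ∈ S, f i t ≤ 0) := by
  have hIcc : ∀ t ∈ S, Icc 0 t ⊆ S := by
    subst hS
    exact fun t ht s hs => ⟨hs.1, lt_of_le_of_lt (EReal.coe_le_coe_iff.2 hs.2) ht.2⟩
  have hmem : ∀ t ∈ S, t ∈ Icc 0 t := fun t ht => right_mem_Icc.2 (hS ▸ ht).1
  have hf : ∀ t ∈ S, ∀ i, ∀ s ∈ Icc 0 t, HasDerivWithinAt (f i) (f' i s) (Icc 0 t) s :=
    fun t ht i s hs => (hderiv i s (hIcc t ht hs)).mono (hIcc t ht)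
  have hc : ∀ t ∈ S, ∀ i j, ∀ s ∈ Ioc 0 t, 0 ≤ a i j s :=
    fun t ht i j s hs => hanonneg i j s (hIcc t ht (Ioc_subset_Icc_self hs))
  have hΦO : ∀ i, Φ i =O[𝓝 0] id := fun i => (hΦ i).isBigO_id_of_map_zero (hΦ0 i)
  refine ⟨fun hineq hinit i t ht => ?_, fun hineq hinit i t ht => ?_⟩
  · exact nonneg_of_laplacian_add_le_deriv (hf t ht) (hc t ht) hΦO
      (fun i s hs => hineq i s (hIcc t ht (Ioc_subset_Icc_self hs))) hinit i t (hmem t ht)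
  · exact nonpos_of_deriv_le_laplacian_add (hf t ht) (hc t ht) hΦO
      (fun i s hs => hineq i s (hIcc t ht (Ioc_subset_Icc_self hs))) hinit i t (hmem t ht)

/-- Sign-preservation principle for finite families of coupled ODE differential
inequalities: with locally Lipschitz reaction terms `Φ i` vanishing at `0`,
initial sign conditions are preserved. -/
theorem stmt_2 {V : Type*} [Fintype V] [Nonempty V]
    (T : EReal) (hT : 0 < T)
    (f f' : V → ℝ → ℝ)
    (a : V → V → ℝ → ℝ) (Φ : V → ℝ → ℝ)
    (S : Set ℝ) (hS : S = {t : ℝ | 0 ≤ t ∧ (t : EReal) < T})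
    (hderiv : ∀ i, ∀ t ∈ S, HasDerivWithinAt (f i) (f' i t) S t)
    (hacont : ∀ i j, ContinuousOn (a i j) S)
    (hanonneg : ∀ i j, ∀ t ∈ S, 0 ≤ a i j t)
    (hΦ : ∀ i, LocallyLipschitz (Φ i))
    (hΦ0 : ∀ i, Φ i 0 = 0) :
    ((∀ i, ∀ t ∈ S, f' i t ≥ (∑ j, a i j t * (f j t - f i t)) + Φ i (f i t)) →
      (∀ i, f i 0 ≥ 0) → ∀ i, ∀ t ∈ S, f i t ≥ 0) ∧
    ((∀ i, ∀ t ∈ S, f' i t ≤ (∑ j, a i j t * (f j t - f i t)) + Φ i (f i t)) →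
      (∀ i, f i 0 ≤ 0) → ∀ i, ∀ t ∈ S, f i t ≤ 0) :=
  stmt_2_general T f f' a Φ S hS hderiv hanonneg hΦ hΦ0
end

section
/- Let N be a positive integer, let Ω ⊆ ℝ^N be an open convex set, let f : Ω → ℝ be a continuous strictly concave function, and suppose f attains its global maximum over Ω at a point x̄ ∈ Ω. Then for every sequence (x_n) in Ω with ‖x_n‖ → ∞ one has f(x_n) → −∞. -/
open Filter Set

/-- A continuous strictly concave function on an open convex subset of `ℝ^N`
attaining its global maximum at an interior point is proper: it tends to `-∞`
along any sequence whose norms tend to `∞`. -/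
theorem stmt_4 (N : ℕ) (hN : 0 < N)
    (Ω : Set (EuclideanSpace ℝ (Fin N)))
    (hopen : IsOpen Ω) (hconv : Convex ℝ Ω)
    (f : EuclideanSpace ℝ (Fin N) → ℝ)
    (hcont : ContinuousOn f Ω)
    (hconc : StrictConcaveOn ℝ Ω f)
    (xbar : EuclideanSpace ℝ (Fin N)) (hxbar : xbar ∈ Ω)
    (hmax : ∀ x ∈ Ω, f x ≤ f xbar)
    (x : ℕ → EuclideanSpace ℝ (Fin N)) (hx : ∀ n, x n ∈ Ω)
    (hnorm : Tendsto (fun n => ‖x n‖) atTop atTop) :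
    Tendsto (fun n => f (x n)) atTop atBot := by
  haveI : Nonempty (Fin N) := ⟨⟨0, hN⟩⟩
  haveI : Nontrivial (EuclideanSpace ℝ (Fin N)) := by
    refine ⟨0, EuclideanSpace.single ⟨0, hN⟩ (1:ℝ), fun h => ?_⟩
    have := congrArg norm h
    simp [EuclideanSpace.norm_single] at this
  have hex : ∃ r > 0, Metric.closedBall xbar r ⊆ Ω := by
    obtain ⟨ε, hε, hball⟩ := Metric.isOpen_iff.mp hopen xbar hxbar
    exact ⟨ε / 2, by positivity, fun y hy =>
      hball (lt_of_le_of_lt (Metric.mem_closedBall.mp hy) (by linarith))⟩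
  obtain ⟨r, hr0, hcb⟩ := hex
  have hsub : Metric.sphere xbar r ⊆ Ω := fun y hy =>
    hcb (Metric.sphere_subset_closedBall hy)
  have hne : (Metric.sphere xbar r).Nonempty :=
    NormedSpace.sphere_nonempty.mpr hr0.le
  obtain ⟨y0, hy0S, hy0max⟩ :=
    (isCompact_sphere xbar r).exists_isMaxOn hne (hcont.mono hsub)
  have hy0Ω : y0 ∈ Ω := hsub hy0S
  have hy0ne : y0 ≠ xbar := by
    intro h
    have : dist y0 xbar = r := Metric.mem_sphere.mp hy0S
    rw [h, dist_self] at this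
    linarith
  have hlt : f y0 < f xbar := by
    have hmid := hconc.2 hy0Ω hxbar hy0ne (by norm_num : (0:ℝ) < 1/2)
      (by norm_num : (0:ℝ) < 1/2) (by norm_num)
    have hmidΩ : (1/2 : ℝ) • y0 + (1/2 : ℝ) • xbar ∈ Ω :=
      hconv hy0Ω hxbar (by norm_num) (by norm_num) (by norm_num)
    have := hmax _ hmidΩ
    simp only [smul_eq_mul] at hmid
    linarith
  obtain ⟨δ, hδ, hδdef⟩ : ∃ δ, 0 < δ ∧ f y0 = f xbar - δ :=
    ⟨f xbar - f y0, by linarith, by ring⟩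
  have hRtop : Tendsto (fun n => ‖x n - xbar‖) atTop atTop := by
    apply tendsto_atTop_mono (fun n => ?_) (tendsto_atTop_add_const_right _ (-‖xbar‖) hnorm)
    have := norm_sub_norm_le (x n) xbar
    linarith
  have hbound : ∀ᶠ n in atTop, f (x n) ≤ f xbar - (δ / r) * ‖x n - xbar‖ := by
    filter_upwards [hRtop.eventually_gt_atTop r] with n hn
    have hR0 : 0 < ‖x n - xbar‖ := lt_trans hr0 hn
    set R : ℝ := ‖x n - xbar‖ with hRdef
    set a : ℝ := r / R with hadef
    have ha0 : 0 < a := div_pos hr0 hR0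
    have ha1 : a < 1 := (div_lt_one hR0).mpr hn
    have hyS : a • x n + (1 - a) • xbar ∈ Metric.sphere xbar r := by
      have h1 : a • x n + (1 - a) • xbar - xbar = a • (x n - xbar) := by module
      rw [Metric.mem_sphere, dist_eq_norm, h1, norm_smul, Real.norm_eq_abs,
        abs_of_pos ha0, ← hRdef, hadef, div_mul_cancel₀ _ hR0.ne']
    have hyle : f (a • x n + (1 - a) • xbar) ≤ f y0 := hy0max hyS
    have hcc := hconc.concaveOn.2 (hx n) hxbar ha0.le
      (by linarith : (0:ℝ) ≤ 1 - a) (by ring : a + (1 - a) = 1)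
    simp only [smul_eq_mul] at hcc
    have hkey : a * f (x n) ≤ a * f xbar - δ := by nlinarith [hcc, hyle]
    have h2 : a * (f xbar - δ / a) = a * f xbar - δ := by field_simp
    have h3 : f (x n) ≤ f xbar - δ / a :=
      (mul_le_mul_iff_right₀ ha0).mp (by linarith)
    have h4 : δ / a = δ / r * R := by
      rw [hadef]; field_simp
    linarith [h3, h4.le, h4.ge]
  have hbot : Tendsto (fun n => f xbar - (δ / r) * ‖x n - xbar‖) atTop atBot := by
    have h1 : Tendsto (fun n => (δ / r) * ‖x n - xbar‖) atTop atTop :=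
      hRtop.const_mul_atTop (div_pos hδ hr0)
    have h2 : Tendsto (fun n => -((δ / r) * ‖x n - xbar‖)) atTop atBot :=
      tendsto_neg_atTop_atBot.comp h1
    simpa [sub_eq_add_neg] using tendsto_atBot_add_const_left atTop (f xbar) h2
  exact tendsto_atBot_mono' atTop hbound hbot
end

section
/- Let α < 0, R̄ < 0, and M₀ > 0 be real numbers with M₀ + R̄ < 0, and set c₁ := (R̄ + M₀)/M₀. Then for all t ≥ 0, R̄/(−1 + c₁·e^{αR̄t}) ≤ (R̄·M₀/(R̄ + M₀))·e^{−αR̄t}. -/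
/-!
With `u = exp (α R̄ t) > 0`, the left side is `R̄ M₀ / ((R̄ + M₀) u - M₀)` and the right side is
`R̄ M₀ / ((R̄ + M₀) u)`. The numerator and both denominators are negative, so dropping the term
`-M₀` from the denominator can only increase the quotient.
-/

lemma div_le_div_of_nonpos_of_le_of_neg {a b c : ℝ} (ha : a ≤ 0) (hbc : b ≤ c) (hc : c < 0) :
    a / b ≤ a / c := by
  rw [← neg_div_neg_eq a b, ← neg_div_neg_eq a c]
  exact div_le_div_of_nonneg_left (neg_nonneg.2 ha) (neg_pos.2 hc) (neg_le_neg hbc)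

lemma comparison_solution_le {R M₀ u : ℝ} (hM : 0 < M₀) (hMR : M₀ + R < 0) (hu : 0 < u) :
    R / (-1 + (R + M₀) / M₀ * u) ≤ R * M₀ / (R + M₀) * u⁻¹ := by
  have hRM : R + M₀ < 0 := by linarith
  calc R / (-1 + (R + M₀) / M₀ * u) = R * M₀ / ((R + M₀) * u - M₀) := by
        field_simp
        ring
    _ ≤ R * M₀ / ((R + M₀) * u) :=
        div_le_div_of_nonpos_of_le_of_neg (mul_nonpos_of_nonpos_of_nonneg (by linarith) hM.le)
          (by linarith) (mul_neg_of_neg_of_pos hRM hu)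
    _ = R * M₀ / (R + M₀) * u⁻¹ := by
        field_simp

theorem stmt_12_general (α Rbar M₀ : ℝ) (hM : 0 < M₀)
    (hMR : M₀ + Rbar < 0) (c₁ : ℝ) (hc₁ : c₁ = (Rbar + M₀) / M₀) :
    ∀ t : ℝ, 0 ≤ t →
      Rbar / (-1 + c₁ * Real.exp (α * Rbar * t)) ≤
        (Rbar * M₀ / (Rbar + M₀)) * Real.exp (-(α * Rbar * t)) := by
  intro t _
  rw [hc₁, Real.exp_neg]
  exact comparison_solution_le hM hMR (Real.exp_pos _)

/-- Exponential upper bound for the explicit solution of the comparison ODE: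
for `α < 0`, `R̄ < 0`, `M₀ > 0` with `M₀ + R̄ < 0` and `c₁ = (R̄ + M₀)/M₀`,
one has `R̄/(-1 + c₁ e^{αR̄t}) ≤ (R̄M₀/(R̄ + M₀)) e^{-αR̄t}` for all `t ≥ 0`. -/
theorem stmt_12 (α Rbar M₀ : ℝ) (hα : α < 0) (hR : Rbar < 0) (hM : 0 < M₀)
    (hMR : M₀ + Rbar < 0) (c₁ : ℝ) (hc₁ : c₁ = (Rbar + M₀) / M₀) :
    ∀ t : ℝ, 0 ≤ t →
      Rbar / (-1 + c₁ * Real.exp (α * Rbar * t)) ≤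
        (Rbar * M₀ / (Rbar + M₀)) * Real.exp (-(α * Rbar * t)) :=
  stmt_12_general α Rbar M₀ hM hMR c₁ hc₁
end

section
/- Let α < 0, R̄ < 0, and M₀ < 0 be real numbers, and set c₁ := R̄/M₀ + 1. Then for all t ≥ 0 the denominator −1 + c₁·e^{αR̄t} is positive, and M₀·e^{−αR̄t} ≤ R̄/(−1 + c₁·e^{αR̄t}) ≤ 0. -/
/-!
Write `x = α R̄ t ≥ 0`. Since `c₁ > 1` and `e^x ≥ 1`, the denominator is positive. Multiplying the
lower bound out, `M₀ e^{-x} (c₁ e^x - 1) = c₁ M₀ - M₀ e^{-x} = R̄ + M₀ (1 - e^{-x}) ≤ R̄`,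
because `c₁ M₀ = R̄ + M₀` and `M₀ < 0`.
-/

open Real

theorem neg_one_add_mul_exp_pos {c x : ℝ} (hc : 1 < c) (hx : 0 ≤ x) : 0 < -1 + c * exp x := by
  nlinarith [one_le_exp hx]

theorem mul_exp_neg_le_div_neg_one_add_mul_exp {R M c x : ℝ} (hM : M < 0) (hx : 0 ≤ x)
    (hD : 0 < -1 + c * exp x) (hcM : c * M = R + M) :
    M * exp (-x) ≤ R / (-1 + c * exp x) := by
  rw [le_div_iff₀ hD]
  have hexp_neg_le_one : exp (-x) ≤ 1 := exp_le_one_iff.mpr (neg_nonpos.mpr hx)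
  calc M * exp (-x) * (-1 + c * exp x)
      = c * M * (exp (-x) * exp x) - M * exp (-x) := by ring
    _ = R + M * (1 - exp (-x)) := by rw [← exp_add, neg_add_cancel, exp_zero, hcM]; ring
    _ ≤ R := by nlinarith

/-- Exponential lower bound for the explicit solution of the comparison ODE:
for `α < 0`, `R̄ < 0`, `M₀ < 0` and `c₁ = R̄/M₀ + 1`, the denominator
`-1 + c₁ e^{αR̄t}` is positive and
`M₀ e^{-αR̄t} ≤ R̄/(-1 + c₁ e^{αR̄t}) ≤ 0` for all `t ≥ 0`. -/
theorem stmt_13 (α Rbar M₀ : ℝ) (hα : α < 0) (hR : Rbar < 0) (hM : M₀ < 0)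
    (c₁ : ℝ) (hc₁ : c₁ = Rbar / M₀ + 1) :
    ∀ t : ℝ, 0 ≤ t →
      0 < -1 + c₁ * Real.exp (α * Rbar * t) ∧
      M₀ * Real.exp (-(α * Rbar * t)) ≤ Rbar / (-1 + c₁ * Real.exp (α * Rbar * t)) ∧
      Rbar / (-1 + c₁ * Real.exp (α * Rbar * t)) ≤ 0 := by
  intro t ht
  have hx : 0 ≤ α * Rbar * t := mul_nonneg (mul_pos_of_neg_of_neg hα hR).le ht
  have hc : 1 < c₁ := by
    rw [hc₁]
    linarith [div_pos_of_neg_of_neg hR hM]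
  have hcM : c₁ * M₀ = Rbar + M₀ := by
    rw [hc₁, add_mul, div_mul_cancel₀ Rbar hM.ne, one_mul]
  have hD := neg_one_add_mul_exp_pos hc hx
  exact ⟨hD, mul_exp_neg_le_div_neg_one_add_mul_exp hM hx hD hcM,
    div_nonpos_of_nonpos_of_nonneg hR.le hD.le⟩
end

section
/- Let α > 0, R̄ > 0, and M₀ < 0 be real numbers with M₀ + R̄ > 0, and set c₁ := (R̄ + M₀)/M₀. Then for all t ≥ 0 the denominator −1 + c₁·e^{αR̄t} is negative, and (R̄·M₀/(R̄ + M₀))·e^{−αR̄t} ≤ R̄/(−1 + c₁·e^{αR̄t}) ≤ 0. -/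
/-- Exponential lower bound for the explicit solution of the comparison ODE:
for `α > 0`, `R̄ > 0`, `M₀ < 0` with `M₀ + R̄ > 0` and `c₁ = (R̄ + M₀)/M₀`,
the denominator `-1 + c₁ e^{αR̄t}` is negative and
`(R̄M₀/(R̄ + M₀)) e^{-αR̄t} ≤ R̄/(-1 + c₁ e^{αR̄t}) ≤ 0` for all `t ≥ 0`. -/
theorem stmt_15 (α Rbar M₀ : ℝ) (hα : 0 < α) (hR : 0 < Rbar) (hM : M₀ < 0)
    (hMR : 0 < M₀ + Rbar) (c₁ : ℝ) (hc₁ : c₁ = (Rbar + M₀) / M₀) :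
    ∀ t : ℝ, 0 ≤ t →
      -1 + c₁ * Real.exp (α * Rbar * t) < 0 ∧
      (Rbar * M₀ / (Rbar + M₀)) * Real.exp (-(α * Rbar * t)) ≤
        Rbar / (-1 + c₁ * Real.exp (α * Rbar * t)) ∧
      Rbar / (-1 + c₁ * Real.exp (α * Rbar * t)) ≤ 0 := by
  intro t ht
  set E : ℝ := Real.exp (α * Rbar * t) with hE
  have hEpos : 0 < E := Real.exp_pos _
  have hE1 : 1 ≤ E := Real.one_le_exp (by positivity)
  have hM0 : M₀ ≠ 0 := ne_of_lt hM
  have hc1neg : c₁ < 0 := by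
    rw [hc₁]
    exact div_neg_of_pos_of_neg (by linarith) hM
  have hD : -1 + c₁ * E < 0 := by nlinarith
  have hDne : (-1 + c₁ * E) ≠ 0 := ne_of_lt hD
  refine ⟨hD, ?_, div_nonpos_of_nonneg_of_nonpos hR.le hD.le⟩
  -- lower bound
  have hMD : M₀ * (-1 + c₁ * E) = (Rbar + M₀) * E - M₀ := by
    rw [hc₁]; field_simp; ring
  have hRD : Rbar / (-1 + c₁ * E) = Rbar * M₀ / ((Rbar + M₀) * E - M₀) := by
    rw [← hMD, mul_comm Rbar M₀, mul_div_mul_left _ _ hM0]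
  rw [hRD, Real.exp_neg, ← hE, mul_comm]
  have hL : E⁻¹ * (Rbar * M₀ / (Rbar + M₀)) = Rbar * M₀ / ((Rbar + M₀) * E) := by
    field_simp
  rw [hL]
  have h1 : 0 < (Rbar + M₀) * E := mul_pos (by linarith) hEpos
  have h2 : 0 < (Rbar + M₀) * E - M₀ := by linarith
  rw [div_le_div_iff₀ h1 h2]
  nlinarith [mul_nonneg hR.le (mul_self_nonneg M₀)]
end

section
/- Let N be a positive integer, let A be a real symmetric negative definite N×N matrix, let P be a diagonal N×N matrix with strictly positive diagonal entries, and let D be a diagonal N×N matrix with nonnegative diagonal entries. Then every eigenvalue of the matrix P·A − D (over the complex numbers) is a negative real number. -/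
open Matrix

lemma quad_re' {n : Type*} [Fintype n] (B : Matrix n n ℝ) (v : n → ℂ) :
    (star v ⬝ᵥ (B.map Complex.ofReal) *ᵥ v).re
      = (fun i => (v i).re) ⬝ᵥ B *ᵥ (fun i => (v i).re)
        + (fun i => (v i).im) ⬝ᵥ B *ᵥ (fun i => (v i).im) := by
  simp only [dotProduct, mulVec, Matrix.map_apply, Pi.star_apply, Complex.star_def,
    Finset.mul_sum, Complex.re_sum, Complex.mul_re, Complex.mul_im, Complex.conj_re,
    Complex.conj_im, Complex.ofReal_re, Complex.ofReal_im, ← Finset.sum_add_distrib]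
  exact Finset.sum_congr rfl fun i _ => Finset.sum_congr rfl fun j _ => by ring

lemma quad_im' {n : Type*} [Fintype n] (B : Matrix n n ℝ) (v : n → ℂ) :
    (star v ⬝ᵥ (B.map Complex.ofReal) *ᵥ v).im
      = (fun i => (v i).re) ⬝ᵥ B *ᵥ (fun i => (v i).im)
        - (fun i => (v i).im) ⬝ᵥ B *ᵥ (fun i => (v i).re) := by
  simp only [dotProduct, mulVec, Matrix.map_apply, Pi.star_apply, Complex.star_def,
    Finset.mul_sum, Complex.im_sum, Complex.mul_re, Complex.mul_im, Complex.conj_re,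
    Complex.conj_im, Complex.ofReal_re, Complex.ofReal_im, ← Finset.sum_sub_distrib]
  exact Finset.sum_congr rfl fun i _ => Finset.sum_congr rfl fun j _ => by ring

lemma symm_swap' {n : Type*} [Fintype n] {B : Matrix n n ℝ} (hB : B.IsSymm) (x y : n → ℝ) :
    x ⬝ᵥ B *ᵥ y = y ⬝ᵥ B *ᵥ x := by
  rw [Matrix.dotProduct_mulVec, ← Matrix.mulVec_transpose, hB.eq, dotProduct_comm]


/-- If `A` is real symmetric negative definite, `P = diagonal p` with `p > 0`,
and `D = diagonal d` with `d ≥ 0`, then every complex eigenvalue of `P·A − D`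
is a negative real number. -/
theorem stmt_16 (N : ℕ) (hN : 0 < N)
    (A : Matrix (Fin N) (Fin N) ℝ) (hsymm : A.IsSymm)
    (hneg : (-A).PosDef)
    (p d : Fin N → ℝ) (hp : ∀ i, 0 < p i) (hd : ∀ i, 0 ≤ d i) :
    ∀ μ ∈ spectrum ℂ
      ((Matrix.diagonal p * A - Matrix.diagonal d).map (Complex.ofReal)),
      μ.im = 0 ∧ μ.re < 0 := by
  intro μ hμ
  set M : Matrix (Fin N) (Fin N) ℝ := Matrix.diagonal p * A - Matrix.diagonal d with hM
  set Q : Matrix (Fin N) (Fin N) ℝ := Matrix.diagonal (fun i => (p i)⁻¹) with hQ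
  set B : Matrix (Fin N) (Fin N) ℝ := A - Matrix.diagonal (fun i => (p i)⁻¹ * d i) with hB
  -- eigenvector
  have hμ' : Module.End.HasEigenvalue (Matrix.toLin' (M.map Complex.ofReal)) μ := by
    rw [Module.End.hasEigenvalue_iff_mem_spectrum]
    rwa [← AlgEquiv.spectrum_eq (Matrix.toLinAlgEquiv' : Matrix (Fin N) (Fin N) ℂ ≃ₐ[ℂ] _)
      (M.map Complex.ofReal)] at hμ
  obtain ⟨v, hv⟩ := hμ'.exists_hasEigenvector
  have heq : (M.map Complex.ofReal) *ᵥ v = μ • v := by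
    simpa [Matrix.toLin'_apply] using hv.apply_eq_smul
  -- Q * M = B
  have hQM : Q * M = B := by
    rw [hM, hQ, hB, mul_sub, ← mul_assoc, diagonal_mul_diagonal, diagonal_mul_diagonal]
    congr 1
    rw [show (fun i => (p i)⁻¹ * p i) = fun _ => (1 : ℝ) from
      funext fun i => inv_mul_cancel₀ (hp i).ne', Matrix.diagonal_one, one_mul]
  have key : (B.map Complex.ofReal) *ᵥ v = μ • ((Q.map Complex.ofReal) *ᵥ v) := by
    have hmm : (Q * M).map Complex.ofReal = Q.map Complex.ofReal * M.map Complex.ofReal := by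
      exact Matrix.map_mul (f := Complex.ofRealHom)
    rw [← hQM, hmm, ← mulVec_mulVec, heq, mulVec_smul]
  have hL : star v ⬝ᵥ (B.map Complex.ofReal) *ᵥ v
      = μ * (star v ⬝ᵥ (Q.map Complex.ofReal) *ᵥ v) := by
    rw [key, dotProduct_smul, smul_eq_mul]
  set x : Fin N → ℝ := fun i => (v i).re with hx
  set y : Fin N → ℝ := fun i => (v i).im with hy
  -- positivity facts
  have hnegB : (-B).PosDef := by
    have hps : (Matrix.diagonal (fun i => (p i)⁻¹ * d i)).PosSemidef :=
      Matrix.posSemidef_diagonal_iff.mpr fun i =>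
        mul_nonneg (inv_nonneg.mpr (hp i).le) (hd i)
    have : (-A + Matrix.diagonal (fun i => (p i)⁻¹ * d i)).PosDef :=
      hneg.add_posSemidef hps
    have e : -B = -A + Matrix.diagonal (fun i => (p i)⁻¹ * d i) := by
      rw [hB]; abel
    rwa [e]
  have hQpos : Q.PosDef := Matrix.posDef_diagonal_iff.mpr fun i => inv_pos.mpr (hp i)
  have hBle : ∀ w : Fin N → ℝ, w ⬝ᵥ B *ᵥ w ≤ 0 := by
    intro w
    have := hnegB.posSemidef.dotProduct_mulVec_nonneg w
    rw [star_trivial, neg_mulVec, dotProduct_neg] at this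
    linarith
  have hBlt : ∀ w : Fin N → ℝ, w ≠ 0 → w ⬝ᵥ B *ᵥ w < 0 := by
    intro w hw
    have := hnegB.dotProduct_mulVec_pos hw
    rw [star_trivial, neg_mulVec, dotProduct_neg] at this
    linarith
  have hQle : ∀ w : Fin N → ℝ, 0 ≤ w ⬝ᵥ Q *ᵥ w := by
    intro w; have := hQpos.posSemidef.dotProduct_mulVec_nonneg w; rwa [star_trivial] at this
  have hQlt : ∀ w : Fin N → ℝ, w ≠ 0 → 0 < w ⬝ᵥ Q *ᵥ w := by
    intro w hw; have := hQpos.dotProduct_mulVec_pos hw; rwa [star_trivial] at this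
  have hxy : x ≠ 0 ∨ y ≠ 0 := by
    by_contra h
    push_neg at h
    apply hv.2
    funext i
    have h1 := congrFun h.1 i
    have h2 := congrFun h.2 i
    simp only [hx, hy, Pi.zero_apply] at h1 h2
    exact Complex.ext h1 h2
  have hBsymm : B.IsSymm := by
    rw [hB]
    exact hsymm.sub (Matrix.isSymm_diagonal _)
  have hQsymm : Q.IsSymm := Matrix.isSymm_diagonal _
  -- re/im of the two quadratic forms
  have hLre : (star v ⬝ᵥ (B.map Complex.ofReal) *ᵥ v).re < 0 := by
    rw [quad_re' B v]
    rcases hxy with h | h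
    · have := hBlt x h; have := hBle y; nlinarith [this]
    · have := hBlt y h; have := hBle x; nlinarith [this]
  have hLim : (star v ⬝ᵥ (B.map Complex.ofReal) *ᵥ v).im = 0 := by
    rw [quad_im' B v, symm_swap' hBsymm, sub_self]
  have hRre : 0 < (star v ⬝ᵥ (Q.map Complex.ofReal) *ᵥ v).re := by
    rw [quad_re' Q v]
    rcases hxy with h | h
    · have := hQlt x h; have := hQle y; nlinarith [this]
    · have := hQlt y h; have := hQle x; nlinarith [this]
  have hRim : (star v ⬝ᵥ (Q.map Complex.ofReal) *ᵥ v).im = 0 := by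
    rw [quad_im' Q v, symm_swap' hQsymm, sub_self]
  have him0 : μ.im = 0 := by
    have := congrArg Complex.im hL
    rw [hLim, Complex.mul_im, hRim, mul_zero, zero_add] at this
    have := this.symm
    rcases mul_eq_zero.mp this with h | h
    · exact h
    · exact absurd h hRre.ne'
  refine ⟨him0, ?_⟩
  have := congrArg Complex.re hL
  rw [Complex.mul_re, hRim, mul_zero, sub_zero] at this
  nlinarith [hLre, hRre, this]
end

section
/- Let N be a positive integer, let B be a real symmetric positive definite N×N matrix, let P be a diagonal N×N matrix with strictly positive diagonal entries, and let D be a diagonal N×N matrix with nonnegative diagonal entries. Then every eigenvalue of the matrix (P·B)·(P·B + D) (over the complex numbers) is a positive real number. -/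
open Matrix
open scoped MatrixOrder

lemma aux_posDef_conj {n : ℕ} {M : Matrix (Fin n) (Fin n) ℝ} (hM : M.PosDef)
    {C : Matrix (Fin n) (Fin n) ℝ} (hC : IsUnit C) : (Cᴴ * M * C).PosDef := by
  refine PosDef.of_dotProduct_mulVec_pos (isHermitian_conjTranspose_mul_mul C hM.1) fun x hx => ?_
  have hinj := Matrix.mulVec_injective_iff_isUnit.mpr hC
  have hCx : C *ᵥ x ≠ 0 := fun h => hx (hinj (by simp [h]))
  have : star x ⬝ᵥ ((Cᴴ * M * C) *ᵥ x) = star (C *ᵥ x) ⬝ᵥ (M *ᵥ (C *ᵥ x)) := by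
    rw [← mulVec_mulVec, ← mulVec_mulVec, dotProduct_mulVec, ← star_mulVec]
  rw [this]
  exact hM.dotProduct_mulVec_pos hCx

lemma aux_dot (n : ℕ) (w : Fin n → ℂ) :
    star w ⬝ᵥ w = ((∑ i, Complex.normSq (w i) : ℝ) : ℂ) := by
  simp [dotProduct, Complex.normSq_eq_conj_mul_self]

lemma aux_dot_pos {n : ℕ} {w : Fin n → ℂ} (hw : w ≠ 0) :
    0 < ∑ i, Complex.normSq (w i) := by
  obtain ⟨i, hi⟩ := Function.ne_iff.mp hw
  exact Finset.sum_pos' (fun j _ => Complex.normSq_nonneg _)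
    ⟨i, Finset.mem_univ i, Complex.normSq_pos.mpr hi⟩

lemma aux_eigvec {n : ℕ} {M : Matrix (Fin n) (Fin n) ℂ} {μ : ℂ} (h : μ ∈ spectrum ℂ M) :
    ∃ v, v ≠ 0 ∧ M *ᵥ v = μ • v := by
  rw [← AlgEquiv.spectrum_eq (Matrix.toLinAlgEquiv <| Pi.basisFun ℂ (Fin n)),
    ← Module.End.hasEigenvalue_iff_mem_spectrum] at h
  obtain ⟨v, hv⟩ := h.exists_hasEigenvector
  refine ⟨v, hv.2, ?_⟩
  have h2 := hv.apply_eq_smul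
  rw [Matrix.toLinAlgEquiv_apply] at h2
  have hrepr : ⇑((Pi.basisFun ℂ (Fin n)).repr v) = v := by ext j; simp
  rw [hrepr] at h2
  rw [← h2]
  ext i
  simp [Pi.basisFun_apply, Finset.sum_apply, Pi.single_apply]

/-- positive real spectrum for a matrix of the form Wc*Wc with Wc complex hermitian invertible,
packaged: if Tc = Wcᴴ * Wc with Wc invertible, spectrum is positive real. -/
lemma aux_spec_pos {n : ℕ} {Wc : Matrix (Fin n) (Fin n) ℂ} (hW : IsUnit Wc)
    {μ : ℂ} (hμ : μ ∈ spectrum ℂ (Wcᴴ * Wc)) : μ.im = 0 ∧ 0 < μ.re := by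
  obtain ⟨v, hv0, hveq⟩ := aux_eigvec hμ
  have hinj := Matrix.mulVec_injective_iff_isUnit.mpr hW
  have hw0 : Wc *ᵥ v ≠ 0 := fun h => hv0 (hinj (by simp [h]))
  have h1 : star v ⬝ᵥ ((Wcᴴ * Wc) *ᵥ v) = star (Wc *ᵥ v) ⬝ᵥ (Wc *ᵥ v) := by
    rw [← mulVec_mulVec, dotProduct_mulVec, ← star_mulVec]
  have h2 : star v ⬝ᵥ ((Wcᴴ * Wc) *ᵥ v) = μ * (star v ⬝ᵥ v) := by
    rw [hveq, dotProduct_smul, smul_eq_mul]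
  set cv : ℝ := ∑ i, Complex.normSq (v i) with hcv
  set qw : ℝ := ∑ i, Complex.normSq ((Wc *ᵥ v) i) with hqw
  have hcvpos : 0 < cv := aux_dot_pos hv0
  have hqwpos : 0 < qw := aux_dot_pos hw0
  have key : μ * (cv : ℂ) = (qw : ℂ) := by
    rw [← aux_dot, ← aux_dot, ← h2, h1]
  have hcvne : (cv : ℂ) ≠ 0 := by exact_mod_cast hcvpos.ne'
  have hμval : μ = ((qw / cv : ℝ) : ℂ) := by
    rw [Complex.ofReal_div, eq_div_iff hcvne, key]
  rw [hμval]
  exact ⟨Complex.ofReal_im _, by rw [Complex.ofReal_re]; positivity⟩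

/-- If `B` is real symmetric positive definite, `P = diagonal p` with `p > 0`,
and `D = diagonal d` with `d ≥ 0`, then every complex eigenvalue of
`(P·B)·(P·B + D)` is a positive real number. -/
theorem stmt_17 (N : ℕ) (hN : 0 < N)
    (B : Matrix (Fin N) (Fin N) ℝ) (hsymm : B.IsSymm)
    (hpos : B.PosDef)
    (p d : Fin N → ℝ) (hp : ∀ i, 0 < p i) (hd : ∀ i, 0 ≤ d i) :
    ∀ μ ∈ spectrum ℂ
      (((Matrix.diagonal p * B) * (Matrix.diagonal p * B + Matrix.diagonal d)).map
        (Complex.ofReal)),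
      μ.im = 0 ∧ 0 < μ.re := by
  intro μ hμ
  classical
  set S : Matrix (Fin N) (Fin N) ℝ := Matrix.diagonal (fun i => Real.sqrt (p i)) with hSdef
  set Dd : Matrix (Fin N) (Fin N) ℝ := Matrix.diagonal d with hDdef
  have hSS : S * S = Matrix.diagonal p := by
    rw [hSdef, diagonal_mul_diagonal]
    exact congrArg _ (funext fun i => Real.mul_self_sqrt (hp i).le)
  have hSH : Sᴴ = S := by
    rw [hSdef, diagonal_conjTranspose]
    congr 1
  have hSpos : S.PosDef := Matrix.PosDef.diagonal (fun i => Real.sqrt_pos.mpr (hp i))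
  have hSunit : IsUnit S := hSpos.isUnit
  -- Q
  have hQpos : (S * B * S).PosDef := by
    have := aux_posDef_conj hpos hSunit
    rwa [hSH] at this
  set Q : Matrix (Fin N) (Fin N) ℝ := S * B * S with hQdef
  have hQps := hQpos.posSemidef
  set R : Matrix (Fin N) (Fin N) ℝ := CFC.sqrt Q with hRdef
  have hRR : R * R = Q := CFC.sqrt_mul_sqrt_self Q hQps.nonneg
  have hRH : Rᴴ = R := (CFC.sqrt_nonneg Q).posSemidef.isHermitian
  have hRdet : R.det ≠ 0 := by
    intro h
    have : R.det * R.det = Q.det := by rw [← det_mul, hRR]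
    rw [h, mul_zero] at this
    exact hQpos.det_pos.ne this
  have hRunit : IsUnit R := (Matrix.isUnit_iff_isUnit_det R).mpr (isUnit_iff_ne_zero.mpr hRdet)
  have hQunit : IsUnit Q := hQpos.isUnit
  -- T
  set T : Matrix (Fin N) (Fin N) ℝ := Q * Q + R * Dd * R with hTdef
  have hQQ : (Q * Q).PosDef := by
    have := aux_posDef_conj Matrix.PosDef.one hQunit
    rwa [mul_one, hQpos.isHermitian.eq] at this
  have hRDR : (R * Dd * R).PosSemidef := by
    have hdd : Matrix.PosSemidef Dd := Matrix.PosSemidef.diagonal (by intro i; exact hd i)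
    have := hdd.conjTranspose_mul_mul_same R
    rwa [hRH] at this
  have hTpos : T.PosDef := hQQ.add_posSemidef hRDR
  -- commutation facts
  have hc1 : R * Q = Q * R := by rw [← hRR, ← mul_assoc]
  have hc2 : S * Dd = Dd * S := by
    rw [hSdef, hDdef, diagonal_mul_diagonal, diagonal_mul_diagonal]
    exact congrArg _ (funext fun i => mul_comm _ _)
  -- key conjugation identity
  have key : (Matrix.diagonal p * B) * (Matrix.diagonal p * B + Dd) * (S * R)
      = (S * R) * T := by
    rw [← hSS, hTdef]
    have e2 : Q * (Q * R) = R * (Q * Q) := by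
      rw [← hc1, ← mul_assoc, ← hc1, mul_assoc]
    have e3 : S * (Dd * R) = Dd * (S * R) := by rw [← mul_assoc, hc2, mul_assoc]
    have p1 : (S * S * B) * ((S * S) * B) * (S * R) = (S * R) * (Q * Q) := by
      have h1 : (S * S * B) * ((S * S) * B) * (S * R) = S * (Q * (Q * R)) := by
        rw [hQdef]; simp only [mul_assoc]
      rw [h1, e2, ← mul_assoc]
    have p2 : (S * S * B) * Dd * (S * R) = (S * R) * (R * Dd * R) := by
      have h1 : (S * R) * (R * Dd * R) = S * (Q * (Dd * R)) := by
        rw [← hRR]; simp only [mul_assoc]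
      rw [h1, hQdef]
      simp only [mul_assoc]
      rw [e3]
    rw [mul_add, add_mul, mul_add, p1, p2]
  -- lift to units and conjugate
  obtain ⟨u, hu⟩ := hSunit.mul hRunit
  have hA' : (Matrix.diagonal p * B) * (Matrix.diagonal p * B + Dd)
      = (u : Matrix (Fin N) (Fin N) ℝ) * T * (↑u⁻¹ : Matrix (Fin N) (Fin N) ℝ) := by
    have h1 : (Matrix.diagonal p * B) * (Matrix.diagonal p * B + Dd) * (u : Matrix (Fin N) (Fin N) ℝ) = (u : Matrix (Fin N) (Fin N) ℝ) * T := by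
      rw [hu]; exact key
    calc (Matrix.diagonal p * B) * (Matrix.diagonal p * B + Dd)
        = (Matrix.diagonal p * B) * (Matrix.diagonal p * B + Dd) * (u : Matrix (Fin N) (Fin N) ℝ) * (↑u⁻¹ : Matrix (Fin N) (Fin N) ℝ) :=
          (Units.mul_inv_cancel_right _ u).symm
      _ = (u : Matrix (Fin N) (Fin N) ℝ) * T * (↑u⁻¹ : Matrix (Fin N) (Fin N) ℝ) := by rw [h1]
  -- map to ℂ
  have hmapfun : ∀ X : Matrix (Fin N) (Fin N) ℝ,
      X.map Complex.ofReal = (Complex.ofRealHom.mapMatrix : Matrix (Fin N) (Fin N) ℝ →+* Matrix (Fin N) (Fin N) ℂ) X :=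
    fun X => rfl
  set ψ : Matrix (Fin N) (Fin N) ℝ →+* Matrix (Fin N) (Fin N) ℂ := Complex.ofRealHom.mapMatrix with hψ
  set w : (Matrix (Fin N) (Fin N) ℂ)ˣ := Units.map ψ.toMonoidHom u with hw
  have hwinv : (↑w⁻¹ : Matrix (Fin N) (Fin N) ℂ) = ψ ↑u⁻¹ := rfl
  have hwcoe : (↑w : Matrix (Fin N) (Fin N) ℂ) = ψ ↑u := rfl
  have hspec : spectrum ℂ (((Matrix.diagonal p * B) * (Matrix.diagonal p * B + Dd)).map Complex.ofReal)
      = spectrum ℂ (T.map Complex.ofReal) := by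
    rw [hmapfun, hmapfun, hA', _root_.map_mul, _root_.map_mul, ← hwcoe, ← hwinv]
    exact spectrum.units_conjugate
  rw [hDdef] at hspec
  rw [hspec] at hμ
  -- T = W * W with W hermitian invertible
  set W : Matrix (Fin N) (Fin N) ℝ := CFC.sqrt T with hWdef
  have hWW : W * W = T := CFC.sqrt_mul_sqrt_self T hTpos.posSemidef.nonneg
  have hWH : Wᴴ = W := (CFC.sqrt_nonneg T).posSemidef.isHermitian
  have hWdet : W.det ≠ 0 := by
    intro h
    have : W.det * W.det = T.det := by rw [← det_mul, hWW]
    rw [h, mul_zero] at this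
    exact hTpos.det_pos.ne this
  have hTc : T.map Complex.ofReal = (W.map Complex.ofReal)ᴴ * (W.map Complex.ofReal) := by
    rw [hmapfun, hmapfun, ← hWW, _root_.map_mul]
    congr 1
    rw [← hmapfun]
    ext i j
    have hsym : W j i = W i j := by
      have := congrFun (congrFun hWH i) j
      simpa [conjTranspose_apply] using this
    simp [conjTranspose_apply, hsym]
  have hWcUnit : IsUnit (W.map Complex.ofReal) := by
    rw [Matrix.isUnit_iff_isUnit_det]
    have : (W.map Complex.ofReal).det = (W.det : ℂ) := by
      rw [hmapfun, ← RingHom.map_det]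
      rfl
    rw [this]
    exact isUnit_iff_ne_zero.mpr (by exact_mod_cast hWdet)
  rw [hTc] at hμ
  exact aux_spec_pos hWcUnit hμ
end
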